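/- Let M be a positroid with Grassmann necklace (I_1,...,I_n), let j ∈ [n] be a non-fixed-point of its decorated permutation, and set M' = { H ∈ M : j ∈ H }. Then for any a ∈ [n] with j ∉ I_a, the set (I_a \ {max_a(I_a \ I_j)}) ∪ {j} is a basis of M', i.e., it lies in M and contains j. -/

import Mathlib

open Finset

/-- Position of `a` in the cyclic (linear) order starting at `t` on `Fin n`. -/
def cval {n : ℕ} (t a : Fin n) : ℕ := ((a - t : Fin n) : ℕ)

/-- Gale order on finsets of `Fin n` induced by the linear order with key `f`:
compare the sorted lists of keys coordinatewise. -/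
def galeLEKey {n : ℕ} (f : Fin n → ℕ) (A B : Finset (Fin n)) : Prop :=
  List.Forall₂ (· ≤ ·) ((A.image f).sort (· ≤ ·)) ((B.image f).sort (· ≤ ·))

/-- Gale order `≤_t` induced by the cyclic order starting at `t`. -/
def galeLE {n : ℕ} (t : Fin n) (A B : Finset (Fin n)) : Prop :=
  galeLEKey (cval t) A B

/-- The set of maximal elements of `D` w.r.t. `≤_a` (a singleton when `D` is nonempty). -/
def cmax {n : ℕ} (a : Fin n) (D : Finset (Fin n)) : Finset (Fin n) :=
  D.filter (fun x => ∀ y ∈ D, cval a y ≤ cval a x)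

/-- The set of minimal elements of `D` w.r.t. `≤_a` (a singleton when `D` is nonempty). -/
def cmin {n : ℕ} (a : Fin n) (D : Finset (Fin n)) : Finset (Fin n) :=
  D.filter (fun x => ∀ y ∈ D, cval a x ≤ cval a y)

/-- A Grassmann necklace on `[n]`. -/
def IsGrassmannNecklace {n : ℕ} [NeZero n] (I : Fin n → Finset (Fin n)) : Prop :=
  ∀ i : Fin n,
    (i ∈ I i → ∃ j : Fin n, I (i + 1) = insert j (I i \ {i})) ∧
    (i ∉ I i → I (i + 1) = I i)

/-- A decorated permutation: a permutation with fixed points colored by `1` or `-1`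
(non-fixed points carry the dummy color `1`). -/
structure DecoratedPerm (n : ℕ) where
  π : Equiv.Perm (Fin n)
  col : Fin n → ℤ
  col_fixed : ∀ i, π i = i → col i = 1 ∨ col i = -1
  col_nonfixed : ∀ i, π i ≠ i → col i = 1

/-- The Grassmann necklace associated to a decorated permutation:
`I_r = { i : i <_r π⁻¹(i), or π(i) = i and col(i) = -1 }`. -/
def necklaceOf {n : ℕ} (P : DecoratedPerm n) : Fin n → Finset (Fin n) :=
  fun r => Finset.univ.filter
    (fun i => cval r i < cval r (P.π.symm i) ∨ (P.π i = i ∧ P.col i = -1))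

/-- The forward map from Grassmann necklaces to decorated permutations:
`P` corresponds to the necklace `I`. -/
def Corresponds {n : ℕ} [NeZero n] (I : Fin n → Finset (Fin n)) (P : DecoratedPerm n) : Prop :=
  ∀ i : Fin n,
    ((I (i + 1) = I i ∧ i ∉ I i) → (P.π i = i ∧ P.col i = 1)) ∧
    ((I (i + 1) = I i ∧ i ∈ I i) → (P.π i = i ∧ P.col i = -1)) ∧
    (∀ j : Fin n, j ≠ i → i ∈ I i → I (i + 1) = insert j (I i \ {i}) → P.π i = j)

/-- `phiSet I j a` is `{j}` if `j ∈ I_a`, and otherwise `{max_a (I_a \ I_j)}`. -/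
def phiSet {n : ℕ} (I : Fin n → Finset (Fin n)) (j a : Fin n) : Finset (Fin n) :=
  if j ∈ I a then {j} else cmax a (I a \ I j)

/-- One pass of the contraction algorithm (fuel-indexed; the loop walks `a ← a+1`). -/
def contractLoop {n : ℕ} [NeZero n] (π : Equiv.Perm (Fin n)) (j : Fin n) :
    ℕ → (Fin n → Fin n) → (Fin n → ℤ) → Fin n → Fin n →
      (Fin n → Fin n) × (Fin n → ℤ)
  | 0, μ, c, q, a => (Function.update μ a q, c)
  | fuel + 1, μ, c, q, a =>
    if π a = j then (Function.update μ a q, c)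
    else if q = a ∨ (cval (a + 1) q < cval (a + 1) (π a) ∧
                      cval (a + 1) (π a) < cval (a + 1) j) then
      contractLoop π j fuel (Function.update μ a q)
        (if q = a then Function.update c a 1 else c) (π a) (a + 1)
    else
      contractLoop π j fuel μ c q (a + 1)

/-- The contraction algorithm: output `(μ, col')` from `(π, col)` and `j`. -/
def contractAlg {n : ℕ} [NeZero n] (π : Equiv.Perm (Fin n)) (col : Fin n → ℤ) (j : Fin n) :
    (Fin n → Fin n) × (Fin n → ℤ) :=
  contractLoop π j n (Function.update (⇑π) j j) (Function.update col j 1) (π j) (j + 1)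

/-- One pass of the restriction algorithm (the loop walks `a ← a-1`). -/
def restrictLoop {n : ℕ} [NeZero n] (π : Equiv.Perm (Fin n)) (j : Fin n) :
    ℕ → (Fin n → Fin n) → (Fin n → ℤ) → Fin n → Fin n →
      (Fin n → Fin n) × (Fin n → ℤ)
  | 0, μ, c, q, a => (Function.update μ a q, c)
  | fuel + 1, μ, c, q, a =>
    if π a = j then (Function.update μ a q, c)
    else if q = a ∨ (cval a j < cval a (π a) ∧ cval a (π a) < cval a q) then
      restrictLoop π j fuel (Function.update μ a q)
        (if q = a then Function.update c a 1 else c) (π a) (a - 1)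
    else
      restrictLoop π j fuel μ c q (a - 1)

/-- The restriction algorithm: output `(μ, col')` from `(π, col)` and `j`. -/
def restrictAlg {n : ℕ} [NeZero n] (π : Equiv.Perm (Fin n)) (col : Fin n → ℤ) (j : Fin n) :
    (Fin n → Fin n) × (Fin n → ℤ) :=
  restrictLoop π j n (Function.update (⇑π) j j) (Function.update col j 1) (π j) (j - 1)

/-!
Let `m = max_a (I_a \ I_j)` and `H = (I_a \ {m}) ∪ {j}`. The Gale comparison `I_t ≤_t H` is
checked by counting the elements of both sets in each initial segment `[t, x]` of `≤_t`. An element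
of `I_s` stays in the necklace until the walk from `s` passes it, which gives `I_t ≤_t I_s` for
all `s`; so `H` can only fail on a segment containing `j` but not `m`, where one needs
`|I_a ∩ [t, x]| < |I_j ∩ [t, x]|`. If `a ∈ [t, x]`, then `I_j \ I_a ⊆ [j, a) ⊆ [t, x]` while
`m ∈ I_a \ I_j` lies outside, and `|I_a \ I_j| = |I_j \ I_a|`. Otherwise the maximality of `m`
forces `I_a ∩ [t, x] ⊆ I_j`, and `j` is an extra element of `I_j ∩ [t, x]`.
-/

namespace Finset

variable {α : Type*} [LinearOrder α]

theorem filter_le_orderEmbOfFin {S : Finset α} {k : ℕ} (h : #S = k) (i : Fin k) :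
    S.filter (· ≤ S.orderEmbOfFin h i) = (Iic i).map (S.orderEmbOfFin h).toEmbedding := by
  ext y
  constructor
  · intro hy
    obtain ⟨l, rfl⟩ : y ∈ Set.range (S.orderEmbOfFin h) := by
      rw [range_orderEmbOfFin]
      exact (mem_filter.1 hy).1
    simpa using (mem_filter.1 hy).2
  · simp only [mem_map, mem_Iic, mem_filter]
    rintro ⟨l, hl, rfl⟩
    exact ⟨orderEmbOfFin_mem S h l, by simpa using hl⟩

theorem card_filter_le_orderEmbOfFin {S : Finset α} {k : ℕ} (h : #S = k) (i : Fin k) :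
    #(S.filter (· ≤ S.orderEmbOfFin h i)) = i + 1 := by
  rw [filter_le_orderEmbOfFin, card_map, Fin.card_Iic]

theorem forall₂_sort_of_card_filter_le {S T : Finset α} (hcard : #S = #T)
    (h : ∀ x, #(T.filter (· ≤ x)) ≤ #(S.filter (· ≤ x))) :
    List.Forall₂ (· ≤ ·) (S.sort (· ≤ ·)) (T.sort (· ≤ ·)) := by
  rw [List.forall₂_iff_get]
  refine ⟨by simp [hcard], fun i hS hT => ?_⟩
  have hiS : i < #S := by simpa using hS
  set σ := S.orderEmbOfFin rfl
  set τ := T.orderEmbOfFin hcard.symm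
  have hσ : (S.sort (· ≤ ·)).get ⟨i, hS⟩ = σ ⟨i, hiS⟩ := by simp [σ, orderEmbOfFin_apply]
  have hτ : (T.sort (· ≤ ·)).get ⟨i, hT⟩ = τ ⟨i, hiS⟩ := by simp [τ, orderEmbOfFin_apply]
  rw [hσ, hτ]
  by_contra! hlt
  have hsub : S.filter (· ≤ τ ⟨i, hiS⟩) ⊆ (S.filter (· ≤ σ ⟨i, hiS⟩)).erase (σ ⟨i, hiS⟩) := by
    intro y hy
    simp only [mem_filter, mem_erase] at hy ⊢
    exact ⟨(hy.2.trans_lt hlt).ne, hy.1, hy.2.trans hlt.le⟩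
  have hσmem : σ ⟨i, hiS⟩ ∈ S.filter (· ≤ σ ⟨i, hiS⟩) :=
    mem_filter.2 ⟨orderEmbOfFin_mem S rfl _, le_rfl⟩
  have hσ_count : #(S.filter (· ≤ σ ⟨i, hiS⟩)) = i + 1 := card_filter_le_orderEmbOfFin _ _
  have hS_le := card_le_card hsub
  rw [card_erase_of_mem hσmem] at hS_le
  have hT_eq : #(T.filter (· ≤ τ ⟨i, hiS⟩)) = i + 1 := card_filter_le_orderEmbOfFin _ _
  have := h (τ ⟨i, hiS⟩)
  omega

end Finset

theorem galeLEKey_of_card_filter_le {n : ℕ} {f : Fin n → ℕ} (hf : Function.Injective f)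
    {A B : Finset (Fin n)} (hcard : #A = #B)
    (h : ∀ x, #(B.filter (f · ≤ x)) ≤ #(A.filter (f · ≤ x))) : galeLEKey f A B := by
  refine Finset.forall₂_sort_of_card_filter_le ?_ fun x => ?_
  · rwa [card_image_of_injective _ hf, card_image_of_injective _ hf]
  · simpa only [filter_image, card_image_of_injective _ hf] using h x

open Fin.NatCast

section CyclicOrder

variable {n : ℕ}

theorem cval_lt (t a : Fin n) : cval t a < n := (a - t).isLt

variable [NeZero n]

theorem cval_self (t : Fin n) : cval t t = 0 := by simp [cval]

theorem cval_injective (t : Fin n) : Function.Injective (cval t) := fun _ _ h =>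
  sub_left_injective (Fin.ext h)

theorem cval_eq_sub_of_le {t a e : Fin n} (h : cval t a ≤ cval t e) :
    cval a e = cval t e - cval t a := by
  have : e - a = (e - t) - (a - t) := by abel
  rw [cval, this, Fin.coe_sub_iff_le.2 h]; rfl

theorem cval_eq_add_sub_of_lt {t a e : Fin n} (h : cval t e < cval t a) :
    cval a e = cval t e + n - cval t a := by
  have : e - a = (e - t) - (a - t) := by abel
  rw [cval, this, Fin.coe_sub_iff_lt.2 h]; unfold cval; omega

theorem cval_natCast_add (s : Fin n) {d : ℕ} (hd : d < n) : cval s (s + d) = d := by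
  simp [cval, Nat.mod_eq_of_lt hd]

theorem add_natCast_cval (s t : Fin n) : s + (cval s t : Fin n) = t := by
  simp [cval]

theorem cmax_eq_singleton {a m : Fin n} {D : Finset (Fin n)} (hm : m ∈ D)
    (hmax : ∀ y ∈ D, cval a y ≤ cval a m) : cmax a D = {m} := by
  ext y
  simp only [cmax, mem_filter, mem_singleton]
  constructor
  · rintro ⟨hy, hy_max⟩
    exact cval_injective a ((hmax y hy).antisymm (hy_max m hm))
  · rintro rfl
    exact ⟨hm, hmax⟩

end CyclicOrder

namespace IsGrassmannNecklace

variable {n : ℕ} [NeZero n] {I : Fin n → Finset (Fin n)}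

theorem mem_succ (hI : IsGrassmannNecklace I) {b e : Fin n} (he : e ∈ I b) (hne : e ≠ b) :
    e ∈ I (b + 1) := by
  by_cases hb : b ∈ I b
  · obtain ⟨x, hx⟩ := (hI b).1 hb
    simp [hx, he, hne]
  · rwa [(hI b).2 hb]

theorem mem_add_natCast (hI : IsGrassmannNecklace I) {s e : Fin n} (he : e ∈ I s) :
    ∀ d ≤ cval s e, e ∈ I (s + d)
  | 0, _ => by simpa using he
  | d + 1, hd => by
    have hdn : d < n := by have := cval_lt s e; omega
    have hne : e ≠ s + d := by
      rintro rfl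
      have := cval_natCast_add s hdn
      omega
    rw [Nat.cast_succ, ← add_assoc]
    exact hI.mem_succ (hI.mem_add_natCast he d (by omega)) hne

theorem mem_of_cval_le (hI : IsGrassmannNecklace I) {s t e : Fin n} (he : e ∈ I s)
    (h : cval s t ≤ cval s e) : e ∈ I t := by
  simpa [add_natCast_cval] using hI.mem_add_natCast he _ h

theorem card_succ_le (hI : IsGrassmannNecklace I) (i : Fin n) : #(I (i + 1)) ≤ #(I i) := by
  by_cases hi : i ∈ I i
  · obtain ⟨x, hx⟩ := (hI i).1 hi
    rw [hx, sdiff_singleton_eq_erase]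
    calc #(insert x ((I i).erase i)) ≤ #((I i).erase i) + 1 := card_insert_le _ _
      _ = #(I i) := card_erase_add_one hi
  · rw [(hI i).2 hi]

theorem card_add_natCast_le (hI : IsGrassmannNecklace I) (s : Fin n) :
    ∀ d : ℕ, #(I (s + d)) ≤ #(I s)
  | 0 => by simp
  | d + 1 => by
    rw [Nat.cast_succ, ← add_assoc]
    exact (hI.card_succ_le _).trans (hI.card_add_natCast_le s d)

theorem card_eq (hI : IsGrassmannNecklace I) (s t : Fin n) : #(I s) = #(I t) := by
  have hst := hI.card_add_natCast_le s (cval s t)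
  have hts := hI.card_add_natCast_le t (cval t s)
  rw [add_natCast_cval] at hst hts
  omega

/-- Counting form of `I t ≤_t I s`. -/
theorem card_filter_le (hI : IsGrassmannNecklace I) (s t : Fin n) (x : ℕ) :
    #((I s).filter (cval t · ≤ x)) ≤ #((I t).filter (cval t · ≤ x)) := by
  by_cases hs : cval t s ≤ x
  · have hsub : (I t).filter (¬ cval t · ≤ x) ⊆ (I s).filter (¬ cval t · ≤ x) := by
      intro e he
      rw [mem_filter] at he ⊢
      exact ⟨hI.mem_of_cval_le he.1 (by omega), he.2⟩
    have hsplit_t := card_filter_add_card_filter_not (s := I t) (cval t · ≤ x)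
    have hsplit_s := card_filter_add_card_filter_not (s := I s) (cval t · ≤ x)
    have := card_le_card hsub
    have := hI.card_eq s t
    omega
  · refine card_le_card fun e he => ?_
    rw [mem_filter] at he ⊢
    refine ⟨hI.mem_of_cval_le he.1 ?_, he.2⟩
    rw [cval_eq_add_sub_of_lt (by omega : cval t e < cval t s),
      cval_eq_add_sub_of_lt (by rw [cval_self]; omega : cval t t < cval t s), cval_self]
    omega

theorem card_filter_lt (hI : IsGrassmannNecklace I) {a j m t : Fin n} {x : ℕ}
    (hjj : j ∈ I j) (hja : j ∉ I a) (hm : m ∈ I a \ I j)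
    (hmax : ∀ e ∈ I a \ I j, cval a e ≤ cval a m) (hjx : cval t j ≤ x) (hxm : x < cval t m) :
    #((I a).filter (cval t · ≤ x)) < #((I j).filter (cval t · ≤ x)) := by
  rw [mem_sdiff] at hm
  have hmj : cval a m < cval a j := by
    by_contra! h
    exact hm.2 (hI.mem_of_cval_le hm.1 h)
  rw [← card_sdiff_lt_card_sdiff_iff]
  by_cases hax : cval t a ≤ x
  · -- `I j \ I a` lies in the cyclic interval `[j, a)`, inside `[t, x]`, while `m` does not.
    have hja_t : cval t j ≤ cval t a := by
      by_contra! h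
      rw [cval_eq_sub_of_le h.le, cval_eq_sub_of_le (by omega : cval t a ≤ cval t m)] at hmj
      omega
    have hfar :
        (I a).filter (cval t · ≤ x) \ (I j).filter (cval t · ≤ x) ⊆ (I a \ I j).erase m := by
      intro e he
      simp only [mem_sdiff, mem_filter, mem_erase] at he ⊢
      exact ⟨by rintro rfl; omega, he.1.1, fun h => he.2 ⟨h, he.1.2⟩⟩
    have hnear : I j \ I a ⊆ (I j).filter (cval t · ≤ x) \ (I a).filter (cval t · ≤ x) := by
      intro e he
      rw [mem_sdiff] at he
      have hej : cval j e < cval j a := by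
        by_contra! h
        exact he.2 (hI.mem_of_cval_le he.1 h)
      simp only [mem_sdiff, mem_filter]
      refine ⟨⟨he.1, ?_⟩, fun h => he.2 h.1⟩
      rw [cval_eq_sub_of_le hja_t] at hej
      rcases le_or_gt (cval t j) (cval t e) with h | h
      · rw [cval_eq_sub_of_le h] at hej
        omega
      · rw [cval_eq_add_sub_of_lt h] at hej
        have := cval_lt t a
        omega
    calc _ ≤ #((I a \ I j).erase m) := card_le_card hfar
      _ < #(I a \ I j) := card_erase_lt_of_mem (mem_sdiff.2 hm)
      _ = #(I j \ I a) := card_sdiff_comm (hI.card_eq a j)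
      _ ≤ _ := card_le_card hnear
  · -- As `a` lies beyond `x`, any `e ∈ (I a \ I j) ∩ [t, x]` would come `≤_a`-after `m`.
    have hsub : (I a).filter (cval t · ≤ x) ⊆ (I j).filter (cval t · ≤ x) := by
      intro e he
      rw [mem_filter] at he ⊢
      refine ⟨?_, he.2⟩
      by_contra hej
      have hem := hmax e (mem_sdiff.2 ⟨he.1, hej⟩)
      rw [cval_eq_add_sub_of_lt (by omega : cval t e < cval t a)] at hem
      rcases le_or_gt (cval t a) (cval t m) with h | h
      · rw [cval_eq_sub_of_le h] at hem
        have := cval_lt t m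
        omega
      · rw [cval_eq_add_sub_of_lt h, cval_eq_add_sub_of_lt (by omega : cval t j < cval t a)] at hmj
        omega
    rw [sdiff_eq_empty_iff_subset.2 hsub, card_empty, card_pos]
    exact ⟨j, by simp [hjj, hja, hjx]⟩

theorem card_filter_exchange_le (hI : IsGrassmannNecklace I) {a j m : Fin n}
    (hjj : j ∈ I j) (hja : j ∉ I a) (hm : m ∈ I a \ I j)
    (hmax : ∀ e ∈ I a \ I j, cval a e ≤ cval a m) (t : Fin n) (x : ℕ) :
    #((insert j ((I a).erase m)).filter (cval t · ≤ x)) ≤ #((I t).filter (cval t · ≤ x)) := by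
  have hat := hI.card_filter_le a t x
  rw [filter_insert, filter_erase]
  split_ifs with hjx
  · refine (card_insert_le _ _).trans ?_
    by_cases hmx : cval t m ≤ x
    · have hm' : m ∈ (I a).filter (cval t · ≤ x) := mem_filter.2 ⟨(mem_sdiff.1 hm).1, hmx⟩
      rw [card_erase_add_one hm']
      exact hat
    · rw [erase_eq_of_notMem (by simp [hmx])]
      exact (hI.card_filter_lt hjj hja hm hmax hjx (not_le.1 hmx)).trans_le
        (hI.card_filter_le j t x)
  · exact card_erase_le.trans hat

end IsGrassmannNecklace

/-- if `j` is not a fixed point and `j ∉ I_a`, then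
`(I_a \ {max_a(I_a \ I_j)}) ∪ {j}` is a basis of `M' = {H ∈ M : j ∈ H}`. -/
theorem contraction_basis_mem (n : ℕ) [NeZero n] (I : Fin n → Finset (Fin n))
    (hI : IsGrassmannNecklace I) (j : Fin n)
    (hj : I (j + 1) ≠ I j)  -- `j` is not a fixed point of the decorated permutation
    (a : Fin n) (ha : j ∉ I a) :
    j ∈ insert j (I a \ cmax a (I a \ I j)) ∧
    (∀ t : Fin n, galeLE t (I t) (insert j (I a \ cmax a (I a \ I j)))) := by
  have hjj : j ∈ I j := by
    by_contra h
    exact hj ((hI j).2 h)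
  have hne : (I a \ I j).Nonempty := by
    rw [← card_pos, card_sdiff_comm (hI.card_eq a j), card_pos]
    exact ⟨j, mem_sdiff.2 ⟨hjj, ha⟩⟩
  obtain ⟨m, hm, hmax⟩ := exists_max_image (I a \ I j) (cval a) hne
  rw [cmax_eq_singleton hm hmax, sdiff_singleton_eq_erase]
  refine ⟨mem_insert_self _ _, fun t => galeLEKey_of_card_filter_le (cval_injective t) ?_
    (hI.card_filter_exchange_le hjj ha hm hmax t)⟩
  rw [card_insert_of_notMem (by simp [ha]), card_erase_add_one (mem_sdiff.1 hm).1, hI.card_eq]
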